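/- The part of K₊ lying in the interval [−10, 1] is exactly C: K₊ ∩ [−10, 1] = C. -/

import Mathlib

noncomputable section

/-- The affine contraction of ratio 1/100 fixing 0. -/
def T0 (x : ℝ) : ℝ := x / 100

/-- The affine contraction of ratio 1/100 fixing 1. -/
def T1 (x : ℝ) : ℝ := 1 + (x - 1) / 100

/-- The affine contraction of ratio 1/100 fixing -1. -/
def Tm1 (x : ℝ) : ℝ := -1 + (x + 1) / 100

/-- The inverse of `T0`. -/
def T0inv (x : ℝ) : ℝ := 100 * x

/-- The `i`-th iterate of `T0` for `i ≥ 0`, and the `|i|`-th iterate of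
`T0⁻¹ : x ↦ 100 x` for `i < 0`. -/
def T0z : ℤ → ℝ → ℝ
  | Int.ofNat n => T0^[n]
  | Int.negSucc n => T0inv^[n + 1]

/-- The set `K₊ = {0} ∪ ⋃ i ∈ ℤ, T₀^[i] '' (C₁ ∪ C₋₁)` where `C₁ = T₁ '' C`,
`C₋₁ = T₋₁ '' C`. -/
def Kplus (C : Set ℝ) : Set ℝ := {0} ∪ ⋃ i : ℤ, T0z i '' (T1 '' C ∪ Tm1 '' C)

/-! Taking a point of `C` of maximal modulus shows `C ⊆ [-1, 1]`, and closedness together with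
`T₀ '' C ⊆ C` gives `0 ∈ C`. A point `x ≠ 0` of `C` cannot be `T₀^[n] y` with `y ∈ C` once
`100⁻ⁿ < |x|`, so unfolding the self-similarity equation at most `n` times exposes `x` as
`T₀^[k] z` with `z ∈ C₁ ∪ C₋₁`, a point of `K₊`. Conversely, nonnegative powers of `T₀` keep
`C₁ ∪ C₋₁ ⊆ C` inside `C`, while negative ones push it out of `[-10, 1]`, since `|z| ≥ 49/50` on
`C₁ ∪ C₋₁`. -/

open Set Filter Topology

lemma T0_iterate_apply (n : ℕ) (x : ℝ) : T0^[n] x = x / 100 ^ n := by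
  induction n with
  | zero => simp
  | succ n ih => rw [Function.iterate_succ_apply', ih, T0]; ring

lemma T0inv_iterate_apply (n : ℕ) (x : ℝ) : T0inv^[n] x = 100 ^ n * x := by
  induction n with
  | zero => simp
  | succ n ih => rw [Function.iterate_succ_apply', ih, T0inv]; ring

lemma tendsto_T0_iterate (x : ℝ) : Tendsto (fun n => T0^[n] x) atTop (𝓝 0) := by
  simp only [T0_iterate_apply]
  exact tendsto_const_nhds.div_atTop (tendsto_pow_atTop_atTop_of_one_lt (by norm_num))

lemma T0_iterate_image_subset_Kplus (C : Set ℝ) (n : ℕ) :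
    T0^[n] '' (T1 '' C ∪ Tm1 '' C) ⊆ Kplus C :=
  fun _ hx => Or.inr (mem_iUnion.2 ⟨n, hx⟩)

lemma abs_le_one_of_abs_le_abs_add {c y : ℝ} (hc : |c| ≤ 99 / 100)
    (hy : |y| ≤ |c + y / 100|) : |c + y / 100| ≤ 1 := by
  have h := abs_add_le c (y / 100)
  rw [abs_div, abs_of_pos (by norm_num : (0 : ℝ) < 100)] at h
  linarith

section SelfSimilar

variable {C : Set ℝ}

lemma abs_le_one_of_selfSimilar (hne : C.Nonempty) (hcomp : IsCompact C)
    (hsub : C ⊆ Tm1 '' C ∪ T0 '' C ∪ T1 '' C) {x : ℝ} (hx : x ∈ C) : |x| ≤ 1 := by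
  obtain ⟨x₀, hx₀, hmax⟩ := hcomp.exists_isMaxOn hne continuous_abs.continuousOn
  refine (hmax hx).trans ?_
  rcases hsub hx₀ with (⟨y, hy, rfl⟩ | ⟨y, hy, rfl⟩) | ⟨y, hy, rfl⟩
  · have h : |y| ≤ |Tm1 y| := hmax hy
    rw [show Tm1 y = -(99 / 100) + y / 100 by rw [Tm1]; ring] at h ⊢
    exact abs_le_one_of_abs_le_abs_add (by norm_num [abs_of_neg]) h
  · have h : |y| ≤ |T0 y| := hmax hy
    rw [show T0 y = 0 + y / 100 by rw [T0]; ring] at h ⊢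
    exact abs_le_one_of_abs_le_abs_add (by norm_num) h
  · have h : |y| ≤ |T1 y| := hmax hy
    rw [show T1 y = 99 / 100 + y / 100 by rw [T1]; ring] at h ⊢
    exact abs_le_one_of_abs_le_abs_add (by norm_num [abs_of_pos]) h

lemma zero_mem_of_mapsTo_T0 (hne : C.Nonempty) (hclosed : IsClosed C) (hmaps : MapsTo T0 C C) :
    (0 : ℝ) ∈ C := by
  obtain ⟨x, hx⟩ := hne
  exact hclosed.mem_of_tendsto (tendsto_T0_iterate x)
    (Eventually.of_forall fun n => hmaps.iterate n hx)

lemma mem_Kplus_or_mem_T0_iterate_image (hsub : C ⊆ Tm1 '' C ∪ T0 '' C ∪ T1 '' C) (n : ℕ)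
    {x : ℝ} (hx : x ∈ C) : x ∈ Kplus C ∨ x ∈ T0^[n] '' C := by
  induction n with
  | zero => exact Or.inr ⟨x, hx, rfl⟩
  | succ n ih =>
    rcases ih with hK | ⟨y, hy, rfl⟩
    · exact Or.inl hK
    rcases hsub hy with (⟨z, hz, rfl⟩ | ⟨z, hz, rfl⟩) | ⟨z, hz, rfl⟩
    · exact Or.inl (T0_iterate_image_subset_Kplus C n ⟨Tm1 z, Or.inr ⟨z, hz, rfl⟩, rfl⟩)
    · exact Or.inr ⟨z, hz, Function.iterate_succ_apply T0 n z⟩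
    · exact Or.inl (T0_iterate_image_subset_Kplus C n ⟨T1 z, Or.inl ⟨z, hz, rfl⟩, rfl⟩)

lemma mem_Kplus_of_mem (hsub : C ⊆ Tm1 '' C ∪ T0 '' C ∪ T1 '' C)
    (hbound : ∀ x ∈ C, |x| ≤ 1) {x : ℝ} (hx : x ∈ C) : x ∈ Kplus C := by
  rcases eq_or_ne x 0 with rfl | hx0
  · exact Or.inl rfl
  obtain ⟨n, hn⟩ := exists_pow_lt_of_lt_one (abs_pos.2 hx0) (by norm_num : (1 : ℝ) / 100 < 1)
  refine (mem_Kplus_or_mem_T0_iterate_image hsub n hx).resolve_right ?_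
  rintro ⟨y, hy, rfl⟩
  have hsmall : |T0^[n] y| ≤ (1 / 100) ^ n := by
    rw [T0_iterate_apply, abs_div, abs_pow, abs_of_pos (by norm_num : (0 : ℝ) < 100), div_pow,
      one_pow]
    gcongr
    exact hbound y hy
  linarith

lemma abs_ge_of_mem_T1_image_union_Tm1_image (hbound : ∀ x ∈ C, |x| ≤ 1) {y : ℝ}
    (hy : y ∈ T1 '' C ∪ Tm1 '' C) : 49 / 50 ≤ |y| := by
  rcases hy with ⟨z, hz, rfl⟩ | ⟨z, hz, rfl⟩
  · obtain ⟨h₁, h₂⟩ := abs_le.mp (hbound z hz)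
    rw [T1, le_abs]
    left; linarith
  · obtain ⟨h₁, h₂⟩ := abs_le.mp (hbound z hz)
    rw [Tm1, le_abs]
    right; linarith

lemma T0z_image_inter_Icc_subset (hbound : ∀ x ∈ C, |x| ≤ 1) (hmaps : MapsTo T0 C C)
    (hC₁ : T1 '' C ∪ Tm1 '' C ⊆ C) (i : ℤ) :
    T0z i '' (T1 '' C ∪ Tm1 '' C) ∩ Icc (-10) 1 ⊆ C := by
  rintro _ ⟨⟨y, hy, rfl⟩, hI⟩
  cases i with
  | ofNat n => exact hmaps.iterate n (hC₁ hy)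
  | negSucc n =>
    -- a negative power of `T₀` multiplies `|y| ≥ 49/50` by at least `100`
    exfalso
    have hy_abs := abs_ge_of_mem_T1_image_union_Tm1_image hbound hy
    have hpow : (100 : ℝ) ≤ 100 ^ (n + 1) := le_self_pow₀ (by norm_num) (by omega)
    have habs : |T0z (Int.negSucc n) y| ≤ 10 := abs_le.mpr ⟨hI.1, by linarith [hI.2]⟩
    rw [T0z, T0inv_iterate_apply, abs_mul, abs_of_pos (by positivity)] at habs
    nlinarith [abs_nonneg y]

end SelfSimilar

theorem stmt_10 (C : Set ℝ) (hne : C.Nonempty) (hcomp : IsCompact C)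
    (hself : C = Tm1 '' C ∪ T0 '' C ∪ T1 '' C) :
    Kplus C ∩ Set.Icc (-10 : ℝ) 1 = C := by
  have hbound : ∀ x ∈ C, |x| ≤ 1 := fun x hx => abs_le_one_of_selfSimilar hne hcomp hself.le hx
  have hmaps : MapsTo T0 C C := fun x hx => hself.ge (Or.inl (Or.inr (mem_image_of_mem T0 hx)))
  have hC₁ : T1 '' C ∪ Tm1 '' C ⊆ C :=
    union_subset (fun _ hx => hself.ge (Or.inr hx)) (fun _ hx => hself.ge (Or.inl (Or.inl hx)))
  refine Subset.antisymm ?_ fun x hx => ?_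
  · rintro x ⟨rfl | hx, hxI⟩
    · exact zero_mem_of_mapsTo_T0 hne hcomp.isClosed hmaps
    · obtain ⟨i, hi⟩ := mem_iUnion.1 hx
      exact T0z_image_inter_Icc_subset hbound hmaps hC₁ i ⟨hi, hxI⟩
  · obtain ⟨h₁, h₂⟩ := abs_le.mp (hbound x hx)
    exact ⟨mem_Kplus_of_mem hself.le hbound hx, by linarith, h₂⟩
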